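/- arXiv:0810.2568 — 3 statements merged into one kernel-verified Lean document; each statement's English description precedes it below -/
import Mathlib

section
/- Let M ⊆ ℂ² be the Lewy hypersurface {Im w = |z|²}, with complexification 𝓜 = {(z,w,χ,τ) ∈ ℂ⁴ : w - τ = 2 i z χ}. For any α, α̃ ∈ ℂ \ {0} and β, β̃, γ ∈ ℂ, the map 𝓗(z,w,χ,τ) = ( α(z+βw)/(1-(γ+iββ̃)w - 2iβ̃z), αα̃w/(1-(γ+iββ̃)w - 2iβ̃z), α̃(χ+β̃τ)/(1-(γ-iββ̃)τ + 2iβχ), αα̃τ/(1-(γ-iββ̃)τ + 2iβχ) ) maps 𝓜 into 𝓜 near the origin, i.e., whenever w - τ = 2izχ and the denominators are nonzero, the images (z',w',χ',τ') satisfy w' - τ' = 2iz'χ'. -/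
/-!
Clearing denominators, the claim becomes `w D₂ - τ D₁ = 2i (z + βw)(χ + β̃τ)`. Expanding, both
sides share the terms `2iββ̃ wτ + 2iβ wχ + 2iβ̃ zτ`, and what is left is exactly the defining
equation `w - τ = 2i zχ` of the complexified Lewy hypersurface.
-/

open Complex

theorem lewy_cross_mul_identity {R : Type*} [CommRing R] (i β γ btil z w χ τ : R)
    (hM : w - τ = 2 * i * z * χ) :
    w * (1 - (γ - i * β * btil) * τ + 2 * i * β * χ) -
        τ * (1 - (γ + i * β * btil) * w - 2 * i * btil * z) =
      2 * i * ((z + β * w) * (χ + btil * τ)) := by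
  linear_combination hM

theorem div_sub_div_eq_mul_div_mul_div {K : Type*} [Field K] (a b c p q w τ d₁ d₂ : K)
    (hd₁ : d₁ ≠ 0) (hd₂ : d₂ ≠ 0) (h : w * d₂ - τ * d₁ = c * (p * q)) :
    a * b * w / d₁ - a * b * τ / d₂ = c * (a * p / d₁) * (b * q / d₂) := by
  rw [div_sub_div _ _ hd₁ hd₂, mul_assoc c, div_mul_div_comm, mul_div_assoc',
    div_left_inj' (mul_ne_zero hd₁ hd₂)]
  linear_combination a * b * h

theorem stmt_2_general (α β γ atil btil : ℂ)
    (z w χ τ : ℂ) (hM : w - τ = 2 * I * z * χ)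
    (hD₁ : 1 - (γ + I * β * btil) * w - 2 * I * btil * z ≠ 0)
    (hD₂ : 1 - (γ - I * β * btil) * τ + 2 * I * β * χ ≠ 0) :
    α * atil * w / (1 - (γ + I * β * btil) * w - 2 * I * btil * z) -
      α * atil * τ / (1 - (γ - I * β * btil) * τ + 2 * I * β * χ) =
    2 * I * (α * (z + β * w) / (1 - (γ + I * β * btil) * w - 2 * I * btil * z)) *
      (atil * (χ + btil * τ) / (1 - (γ - I * β * btil) * τ + 2 * I * β * χ)) :=
  div_sub_div_eq_mul_div_mul_div _ _ _ _ _ _ _ _ _ hD₁ hD₂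
    (lewy_cross_mul_identity I β γ btil z w χ τ hM)

theorem stmt_2 (α β γ atil btil : ℂ) (hα : α ≠ 0) (hatil : atil ≠ 0)
    (z w χ τ : ℂ) (hM : w - τ = 2 * I * z * χ)
    (hD₁ : 1 - (γ + I * β * btil) * w - 2 * I * btil * z ≠ 0)
    (hD₂ : 1 - (γ - I * β * btil) * τ + 2 * I * β * χ ≠ 0) :
    α * atil * w / (1 - (γ + I * β * btil) * w - 2 * I * btil * z) -
      α * atil * τ / (1 - (γ - I * β * btil) * τ + 2 * I * β * χ) =
    2 * I * (α * (z + β * w) / (1 - (γ + I * β * btil) * w - 2 * I * btil * z)) *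
      (atil * (χ + btil * τ) / (1 - (γ - I * β * btil) * τ + 2 * I * β * χ)) :=
  stmt_2_general α β γ atil btil z w χ τ hM hD₁ hD₂
end

section
/- Conversely, if a diagonal-type map 𝓗(z,w,χ,τ) = (az, bw, ãχ, b̃τ) with a, b, ã, b̃ ∈ ℂ \ {0} maps 𝓜 = {w - τ = 2ic₁(zχ)ᵐ + 2ic₂(zχ)ⁿ} into itself (c₁,c₂ ≠ 0, 1 < m < n), then b = b̃ = (aã)ᵐ and (aã)^{n-m} = 1. -/
open Complex Polynomial

/-!
Points with `χ = 1` and `τ ∈ {0, 1}` already force `b = b̃` and the one-variable identity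
`b P(s) = P(aã s)` for `P(s) = 2i c₁ sᵐ + 2i c₂ sⁿ`. Comparing the coefficients of `sᵐ` and `sⁿ`
gives `b = (aã)ᵐ = (aã)ⁿ`.
-/

theorem coeffs_eq_zero_of_forall_monomial_add_eq_zero {R : Type*} [CommRing R] [IsDomain R]
    [Infinite R] {m n : ℕ} (hmn : m ≠ n) {α β : R} (h : ∀ s : R, α * s ^ m + β * s ^ n = 0) :
    α = 0 ∧ β = 0 := by
  have hp : C α * X ^ m + C β * X ^ n = 0 :=
    Polynomial.funext fun s => by simpa using h s
  have hcoeff_m := congrArg (coeff · m) hp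
  have hcoeff_n := congrArg (coeff · n) hp
  simp only [coeff_C_mul_X_pow, coeff_add, coeff_zero, if_neg hmn,
    if_neg hmn.symm] at hcoeff_m hcoeff_n
  exact ⟨by simpa using hcoeff_m, by simpa using hcoeff_n⟩

theorem eq_and_mul_eq_of_mapsTo_graph {R : Type*} [CommRing R] {f g : R → R} {b b' : R}
    (hmap : ∀ z w χ τ : R, w - τ = f (z * χ) → b * w - b' * τ = g (z * χ)) :
    b = b' ∧ ∀ s, b * f s = g s := by
  have hfs (s : R) : b * f s - b' * 0 = g s := by
    simpa using hmap s (f s) 1 0 (by simp)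
  have hfs_shift : b * (f 0 + 1) - b' * 1 = g 0 := by
    simpa using hmap 0 (f 0 + 1) 1 1 (by simp)
  refine ⟨?_, fun s => by simpa using hfs s⟩
  linear_combination hfs_shift - hfs 0

theorem stmt_5_general (c₁ c₂ : ℂ) (hc₁ : c₁ ≠ 0) (hc₂ : c₂ ≠ 0) (m n : ℕ)
    (hmn : m < n) (a b atil btil : ℂ)
    (ha : a ≠ 0) (hatil : atil ≠ 0)
    (hmap : ∀ z w χ τ : ℂ,
      w - τ = 2 * I * c₁ * (z * χ) ^ m + 2 * I * c₂ * (z * χ) ^ n →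
      b * w - btil * τ =
        2 * I * c₁ * ((a * atil) * (z * χ)) ^ m +
          2 * I * c₂ * ((a * atil) * (z * χ)) ^ n) :
    b = (a * atil) ^ m ∧ btil = (a * atil) ^ m ∧ (a * atil) ^ (n - m) = 1 := by
  set A := a * atil
  obtain ⟨hbb, hscale⟩ := eq_and_mul_eq_of_mapsTo_graph
    (f := fun s => 2 * I * c₁ * s ^ m + 2 * I * c₂ * s ^ n)
    (g := fun s => 2 * I * c₁ * (A * s) ^ m + 2 * I * c₂ * (A * s) ^ n) hmap
  obtain ⟨hm_coeff, hn_coeff⟩ := coeffs_eq_zero_of_forall_monomial_add_eq_zero hmn.ne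
    (α := 2 * I * c₁ * (b - A ^ m)) (β := 2 * I * c₂ * (b - A ^ n))
    fun s => by linear_combination hscale s
  have hbm : b = A ^ m := by simpa [I_ne_zero, hc₁, sub_eq_zero] using hm_coeff
  have hbn : b = A ^ n := by simpa [I_ne_zero, hc₂, sub_eq_zero] using hn_coeff
  have hA : A ≠ 0 := mul_ne_zero ha hatil
  refine ⟨hbm, hbb ▸ hbm, ?_⟩
  rw [pow_sub₀ A hA hmn.le, ← hbn, hbm, mul_inv_cancel₀ (pow_ne_zero m hA)]

theorem stmt_5 (c₁ c₂ : ℂ) (hc₁ : c₁ ≠ 0) (hc₂ : c₂ ≠ 0) (m n : ℕ)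
    (hm : 1 < m) (hmn : m < n) (a b atil btil : ℂ)
    (ha : a ≠ 0) (hb : b ≠ 0) (hatil : atil ≠ 0) (hbtil : btil ≠ 0)
    (hmap : ∀ z w χ τ : ℂ,
      w - τ = 2 * I * c₁ * (z * χ) ^ m + 2 * I * c₂ * (z * χ) ^ n →
      b * w - btil * τ =
        2 * I * c₁ * ((a * atil) * (z * χ)) ^ m +
          2 * I * c₂ * ((a * atil) * (z * χ)) ^ n) :
    b = (a * atil) ^ m ∧ btil = (a * atil) ^ m ∧ (a * atil) ^ (n - m) = 1 :=
  stmt_5_general c₁ c₂ hc₁ hc₂ m n hmn a b atil btil ha hatil hmap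
end

section
/- Segre mapping vanishing identity for the Lewy hypersurface: For M = {Im w = |z|²} in ℂ² (so Q(z, χ, τ) = τ + 2izχ), the Segre mappings v^r defined by v¹(t⁰) = (t⁰, 0) and v^r(t⁰,…,t^{r−1}) = (t⁰, Q(t⁰, t¹, conj-part u^{r−1}(t¹,…,t^{r−1}))) satisfy v²(0, x¹) = 0 and more generally v^{2r}(0, x¹, …, x^{r−1}, x^r, x^{r−1}, …, x¹) = 0 for all x near 0. -/
/-!
Unfolding the recursion gives the closed form `u^r(t) = 2i ∑_{k<r} (-1)^k t^k t^{k+1}`: each level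
of nesting conjugates once more, and `conj (2i) = -2i` produces the alternating sign. For the
symmetric substitution `t⁰ = 0`, `t^j = t^{2r-j}`, the reflection `k ↦ 2r - 1 - k` of the
remaining terms `k ≥ 1` reverses the sign of every term, so the sum is its own negative.
-/

open Complex

/-- The maps `u^r` for the Lewy hypersurface `Im w = |z|²`, with
`Q(z,χ,τ) = τ + 2izχ`: `u¹(t⁰) = 0` and
`u^{r+1}(t⁰,…,t^r) = Q(t⁰, t¹, ū^r(t¹,…,t^r))`, where `ū(t) = conj(u(conj t))`. -/
noncomputable def uSeg : (r : ℕ) → (Fin (r + 1) → ℂ) → ℂ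
  | 0, _ => 0
  | r + 1, t =>
      (starRingEnd ℂ) (uSeg r fun j => (starRingEnd ℂ) (t j.succ)) +
        2 * I * t 0 * t 1

/-- The Segre mappings `v^r(t) = (t⁰, u^r(t))` for the Lewy hypersurface. -/
noncomputable def vSeg (r : ℕ) (t : Fin (r + 1) → ℂ) : ℂ × ℂ :=
  (t 0, uSeg r t)

theorem uSeg_eq_sum (r : ℕ) (t : Fin (r + 1) → ℂ) :
    uSeg r t = 2 * I * ∑ k : Fin r, (-1) ^ (k : ℕ) * t k.castSucc * t k.succ := by
  induction r with
  | zero => simp [uSeg]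
  | succ r ih =>
    rw [uSeg, ih, Fin.sum_univ_succ, mul_add, Finset.mul_sum, Finset.mul_sum, add_comm]
    simp only [map_mul, map_sum, map_pow, map_neg, map_one, map_ofNat, conj_I, conj_conj,
      Fin.succ_castSucc, Fin.val_succ, Fin.castSucc_zero, Fin.succ_zero_eq_one, Fin.val_zero]
    congr 1
    · ring
    · exact Finset.sum_congr rfl fun k _ => by ring

theorem Fin.neg_one_pow_val_rev {R : Type*} [Monoid R] [HasDistribNeg R] {n : ℕ} (hn : Even n)
    (k : Fin n) : (-1 : R) ^ (k.rev : ℕ) = -(-1) ^ (k : ℕ) := by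
  rw [← neg_one_mul ((-1 : R) ^ (k : ℕ)), ← pow_succ']
  refine neg_one_pow_congr ?_
  rw [Fin.val_rev, Nat.even_sub (by omega)]
  simp [hn]

theorem Fin.sum_neg_one_pow_mul_castSucc_mul_succ_eq_zero {R : Type*} [CommRing R]
    [IsAddTorsionFree R] {m : ℕ} (s : Fin (2 * m + 1) → R) (hs : ∀ i, s i.rev = s i) :
    ∑ k : Fin (2 * m), (-1) ^ (k : ℕ) * s k.castSucc * s k.succ = 0 := by
  refine self_eq_neg.mp ?_
  calc ∑ k : Fin (2 * m), (-1) ^ (k : ℕ) * s k.castSucc * s k.succ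
      = ∑ k : Fin (2 * m), (-1) ^ (k.rev : ℕ) * s k.rev.castSucc * s k.rev.succ :=
        (Fintype.sum_equiv Fin.revPerm _ _ fun _ => rfl).symm
    _ = -∑ k : Fin (2 * m), (-1) ^ (k : ℕ) * s k.castSucc * s k.succ := by
      rw [← Finset.sum_neg_distrib]
      refine Finset.sum_congr rfl fun k _ => ?_
      rw [← Fin.rev_succ, ← Fin.rev_castSucc, hs, hs, Fin.neg_one_pow_val_rev (even_two_mul m)]
      ring

theorem uSeg_eq_zero_of_palindrome {n : ℕ} (hn : Odd n) (t : Fin (n + 1) → ℂ) (h0 : t 0 = 0)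
    (ht : ∀ i j : Fin (n + 1), (i : ℕ) + j = n + 1 → t i = t j) : uSeg n t = 0 := by
  obtain ⟨m, rfl⟩ := hn
  have hsum := Fin.sum_neg_one_pow_mul_castSucc_mul_succ_eq_zero (fun i => t i.succ)
    fun i => ht _ _ (by simp only [Fin.val_succ, Fin.val_rev]; omega)
  rw [uSeg_eq_sum, Fin.sum_univ_succ]
  simp only [Fin.castSucc_zero, h0, Fin.val_succ, pow_succ, mul_neg_one, neg_mul,
    ← Fin.succ_castSucc, Finset.sum_neg_distrib, hsum]
  simp

theorem stmt_13 (r : ℕ) (x : Fin r → ℂ) :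
    vSeg (2 * r - 1)
      (fun j : Fin (2 * r - 1 + 1) =>
        if h : (j : ℕ) = 0 then 0
        else if h2 : (j : ℕ) ≤ r then x ⟨(j : ℕ) - 1, by omega⟩
        else x ⟨2 * r - (j : ℕ) - 1, by have := j.isLt; omega⟩) = (0, 0) := by
  rcases r with _ | m
  · simp [vSeg, uSeg]
  · refine Prod.ext (by simp [vSeg])
      (uSeg_eq_zero_of_palindrome ⟨m, by omega⟩ _ (by simp) fun i j hij => ?_)
    split_ifs
    all_goals first
      | exact congrArg x (Fin.ext (by dsimp only; omega))
      | (have := i.isLt; have := j.isLt; omega)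
end
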